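/- arXiv:1208.2789 — 5 statements merged into one kernel-verified Lean document; each statement's English description precedes it below -/
import Mathlib

section
/- Radial Hadamard variation formula. Let $I\subseteq\mathbb{R}$ be an interval, let $\xi : I \to \mathbb{C}$ satisfy $|\xi(t)| = 1$ for all $t$, and let $g_1, g_2 : I \to \mathbb{C}$ be differentiable functions with $|g_1(t)| < 1$, $|g_2(t)| < 1$ and $g_1(t)\ne g_2(t)$ for all $t$, satisfying the radial Loewner equation $g_j'(t) = g_j(t)\,\dfrac{\xi(t)+g_j(t)}{\xi(t)-g_j(t)}$ for $j = 1,2$. Then the function $t \mapsto \log\left|\dfrac{1-g_1(t)\overline{g_2(t)}}{g_1(t)-g_2(t)}\right|$ is differentiable with derivative $-\,\mathrm{Re}\,\dfrac{\xi(t)+g_1(t)}{\xi(t)-g_1(t)}\;\mathrm{Re}\,\dfrac{\xi(t)+g_2(t)}{\xi(t)-g_2(t)}$ at every $t\in I$. -/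
/-!
Write `P(x, z) = (x + z) / (x - z)` for the Herglotz kernel, `N = 1 - g₁ conj g₂` and
`D = g₁ - g₂`. The derivative of `log ‖N / D‖` is `Re (N' / N - D' / D)`. On the unit circle
`conj ξ = ξ⁻¹`, so `conj P(ξ, z) = (1 + conj z ξ) / (1 - conj z ξ)`, and after substituting the
Loewner equation `N' / N - D' / D` becomes a rational function of `ξ, g₁, g₂, conj g₂` that
simplifies to `-(ξ P(ξ, g₂) + g₁ conj P(ξ, g₂)) / (ξ - g₁)`. Since `ξ / (ξ - g₁) = (P(ξ, g₁) + 1) / 2`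
and `g₁ / (ξ - g₁) = (P(ξ, g₁) - 1) / 2`, its real part is `-Re P(ξ, g₁) Re P(ξ, g₂)`.
-/

open Complex ComplexConjugate

theorem HasDerivAt.log_norm {f : ℝ → ℂ} {f' : ℂ} {t : ℝ} (hf : HasDerivAt f f' t)
    (hft : f t ≠ 0) : HasDerivAt (fun s => Real.log ‖f s‖) (f' / f t).re t := by
  have hsq : HasDerivAt (fun s => Real.log (‖f s‖ ^ 2) / 2)
      (2 * Inner.inner ℝ (f t) f' / ‖f t‖ ^ 2 / 2) t :=
    (hf.norm_sq.log (by positivity)).div_const 2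
  have hlog : (fun s => Real.log ‖f s‖) = fun s => Real.log (‖f s‖ ^ 2) / 2 := by
    funext s
    rw [Real.log_pow]
    ring
  rw [hlog]
  convert hsq using 1
  rw [Complex.inner, div_re, ← normSq_eq_norm_sq, mul_re, conj_re, conj_im]
  field_simp
  ring

theorem HasDerivAt.log_norm_div {f g : ℝ → ℂ} {f' g' : ℂ} {t : ℝ} (hf : HasDerivAt f f' t)
    (hg : HasDerivAt g g' t) (hft : f t ≠ 0) (hgt : g t ≠ 0) :
    HasDerivAt (fun s => Real.log ‖f s / g s‖) (f' / f t - g' / g t).re t := by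
  convert (hf.fun_div hg hgt).log_norm (div_ne_zero hft hgt) using 2
  field_simp

theorem conj_herglotz_of_norm_eq_one {x : ℂ} (hx : ‖x‖ = 1) (z : ℂ) :
    conj ((x + z) / (x - z)) = (1 + conj z * x) / (1 - conj z * x) := by
  have hxx : conj x * x = 1 := by
    rw [← normSq_eq_conj_mul_self, normSq_eq_norm_sq, hx]; norm_num
  have hx0 : x ≠ 0 := norm_ne_zero_iff.mp (by rw [hx]; norm_num)
  rw [map_div₀, map_add, map_sub, ← mul_div_mul_right _ _ hx0, add_mul, sub_mul, hxx]

/-- With `a' = a P(x, a)`, `b' = b P(x, b)` and `c' = c (1 + c x) / (1 - c x)`, the left side is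
`N' / N - D' / D` for `N = 1 - a c` and `D = a - b`. -/
theorem green_logDeriv_identity {K : Type*} [Field K] {x a b c : K} (hxa : x ≠ a) (hxb : x ≠ b)
    (hab : a ≠ b) (hac : a * c ≠ 1) (hcx : c * x ≠ 1) :
    -(a * c * ((x + a) / (x - a) + (1 + c * x) / (1 - c * x))) / (1 - a * c)
        - (a * ((x + a) / (x - a)) - b * ((x + b) / (x - b))) / (a - b)
      = -(x * ((x + b) / (x - b)) + a * ((1 + c * x) / (1 - c * x))) / (x - a) := by
  have hxa' : x - a ≠ 0 := sub_ne_zero.mpr hxa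
  have hxb' : x - b ≠ 0 := sub_ne_zero.mpr hxb
  have hab' : a - b ≠ 0 := sub_ne_zero.mpr hab
  have hac' : 1 - a * c ≠ 0 := sub_ne_zero.mpr hac.symm
  have hcx' : 1 - c * x ≠ 0 := sub_ne_zero.mpr hcx.symm
  field_simp
  ring

theorem re_div_sub_eq_neg_re_herglotz_mul_re {x a : ℂ} (hxa : x ≠ a) (q : ℂ) :
    (-(x * q + a * conj q) / (x - a)).re = -(((x + a) / (x - a)).re * q.re) := by
  have hxa' : x - a ≠ 0 := sub_ne_zero.mpr hxa
  set p := (x + a) / (x - a)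
  have hsplit : -(x * q + a * conj q) / (x - a) = -(p * (q + conj q) + (q - conj q)) / 2 := by
    simp only [p]
    field_simp
    ring
  rw [hsplit, add_conj, sub_conj]
  simp only [ofReal_mul, ofReal_ofNat, neg_add_rev, div_ofNat_re, add_re, neg_re, mul_re, re_ofNat,
    ofReal_re, im_ofNat, ofReal_im, mul_zero, sub_zero, I_re, mul_im, zero_mul, add_zero, I_im,
    mul_one, sub_self, neg_zero, zero_add]
  ring

theorem radial_hadamard_variation_general (I : Set ℝ)
    (ξ g₁ g₂ : ℝ → ℂ)
    (hξ : ∀ t ∈ I, ‖ξ t‖ = 1)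
    (hg₁ : ∀ t ∈ I, ‖g₁ t‖ < 1)
    (hg₂ : ∀ t ∈ I, ‖g₂ t‖ < 1)
    (hne : ∀ t ∈ I, g₁ t ≠ g₂ t)
    (hd₁ : ∀ t ∈ I, HasDerivAt g₁ (g₁ t * ((ξ t + g₁ t) / (ξ t - g₁ t))) t)
    (hd₂ : ∀ t ∈ I, HasDerivAt g₂ (g₂ t * ((ξ t + g₂ t) / (ξ t - g₂ t))) t) :
    ∀ t ∈ I,
      HasDerivAt
        (fun s => Real.log (‖
          ((1 - g₁ s * (starRingEnd ℂ) (g₂ s)) / (g₁ s - g₂ s))‖))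
        (-(((ξ t + g₁ t) / (ξ t - g₁ t)).re * ((ξ t + g₂ t) / (ξ t - g₂ t)).re)) t := by
  intro t ht
  have hξg₁ : ξ t ≠ g₁ t := fun h => (hg₁ t ht).ne (h ▸ hξ t ht)
  have hξg₂ : ξ t ≠ g₂ t := fun h => (hg₂ t ht).ne (h ▸ hξ t ht)
  have hg₁g₂ : g₁ t * conj (g₂ t) ≠ 1 := ne_of_apply_ne norm <| by
    rw [norm_mul, norm_conj, norm_one]
    nlinarith [hg₁ t ht, hg₂ t ht, norm_nonneg (g₁ t), norm_nonneg (g₂ t)]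
  have hg₂ξ : conj (g₂ t) * ξ t ≠ 1 := ne_of_apply_ne norm <| by
    rw [norm_mul, norm_conj, hξ t ht, mul_one, norm_one]
    exact (hg₂ t ht).ne
  have hnum := (hasDerivAt_const t 1).fun_sub ((hd₁ t ht).fun_mul (hd₂ t ht).star)
  refine (hnum.log_norm_div ((hd₁ t ht).fun_sub (hd₂ t ht)) (sub_ne_zero.mpr hg₁g₂.symm)
    (sub_ne_zero.mpr (hne t ht))).congr_deriv ?_
  rw [← re_div_sub_eq_neg_re_herglotz_mul_re hξg₁]
  simp only [star_mul', Complex.star_def, conj_herglotz_of_norm_eq_one (hξ t ht)]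
  congr 1
  linear_combination green_logDeriv_identity hξg₁ hξg₂ (hne t ht) hg₁g₂ hg₂ξ

/-- Radial Hadamard variation formula: if `g₁, g₂` solve the radial
Loewner equation in the unit disc with driving function `ξ` on the unit circle and
never collide, then `t ↦ log |(1 - g₁(t) conj (g₂(t))) / (g₁(t) - g₂(t))|` is
differentiable with derivative
`- Re((ξ+g₁)/(ξ-g₁)) · Re((ξ+g₂)/(ξ-g₂))`. -/
theorem radial_hadamard_variation (I : Set ℝ) (hI : I.OrdConnected)
    (ξ g₁ g₂ : ℝ → ℂ)
    (hξ : ∀ t ∈ I, ‖ξ t‖ = 1)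
    (hg₁ : ∀ t ∈ I, ‖g₁ t‖ < 1)
    (hg₂ : ∀ t ∈ I, ‖g₂ t‖ < 1)
    (hne : ∀ t ∈ I, g₁ t ≠ g₂ t)
    (hd₁ : ∀ t ∈ I, HasDerivAt g₁ (g₁ t * ((ξ t + g₁ t) / (ξ t - g₁ t))) t)
    (hd₂ : ∀ t ∈ I, HasDerivAt g₂ (g₂ t * ((ξ t + g₂ t) / (ξ t - g₂ t))) t) :
    ∀ t ∈ I,
      HasDerivAt
        (fun s => Real.log (‖
          ((1 - g₁ s * (starRingEnd ℂ) (g₂ s)) / (g₁ s - g₂ s))‖))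
        (-(((ξ t + g₁ t) / (ξ t - g₁ t)).re * ((ξ t + g₂ t) / (ξ t - g₂ t)).re)) t :=
  radial_hadamard_variation_general I ξ g₁ g₂ hξ hg₁ hg₂ hne hd₁ hd₂
end

section
/- First $\mathrm{SLE}_0$ observable. Let $I\subseteq\mathbb{R}$ be an interval and let $u_0, u_1 : I \to \mathbb{C}$ be differentiable with $u_0(t)\notin\{0,1\}$ and $u_1(t)\ne 0$ for all $t$, satisfying $u_0'(t) = u_0(t)\,\dfrac{1+u_0(t)}{1-u_0(t)}$ and $u_1'(t) = \left(\dfrac{2}{(1-u_0(t))^2} - 1\right) u_1(t)$. Then the function $t \mapsto e^{t}\,\dfrac{(1-u_0(t))^2\,u_1(t)^2}{u_0(t)^{3}}$ is constant on $I$. (Consequently $\arg\big[(1-w)w^{-3/2}w'\big]$ is invariant under the flow, i.e., it is an $\mathrm{SLE}_0$ observable.) -/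
/-!
Writing `w = u₀`, the flow gives `u₀'/u₀ = (1+w)/(1-w)` and `u₁'/u₁ = 2/(1-w)² - 1`, so the
logarithmic derivative of `e^t (1-u₀)² u₁² / u₀³` is
`1 - 2 w(1+w)/(1-w)² + 2 (2/(1-w)² - 1) - 3 (1+w)/(1-w)`,
which vanishes identically after multiplying by `(1-w)²`. A function with zero derivative on an
interval is constant there.
-/

theorem Set.OrdConnected.eq_of_hasDerivAt_eq_zero {E : Type*} [NormedAddCommGroup E]
    [NormedSpace ℝ E] {s : Set ℝ} (hs : s.OrdConnected) {f : ℝ → E}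
    (hf : ∀ t ∈ s, HasDerivAt f 0 t) {x y : ℝ} (hx : x ∈ s) (hy : y ∈ s) : f x = f y := by
  have h := hs.convex.norm_image_sub_le_of_norm_hasDerivWithin_le
    (fun t ht => (hf t ht).hasDerivWithinAt) (fun _ _ => (norm_zero (E := E)).le) hx hy
  rw [zero_mul, norm_le_zero_iff, sub_eq_zero] at h
  exact h.symm

noncomputable def sle0Observable (u₀ u₁ : ℝ → ℂ) (t : ℝ) : ℂ :=
  (Real.exp t : ℂ) * ((1 - u₀ t) ^ 2 * u₁ t ^ 2 / u₀ t ^ 3)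

theorem hasDerivAt_sle0Observable {u₀ u₁ : ℝ → ℂ} {t : ℝ} (hw₀ : u₀ t ≠ 0) (hw₁ : u₀ t ≠ 1)
    (hd₀ : HasDerivAt u₀ (u₀ t * ((1 + u₀ t) / (1 - u₀ t))) t)
    (hd₁ : HasDerivAt u₁ ((2 / (1 - u₀ t) ^ 2 - 1) * u₁ t) t) :
    HasDerivAt (sle0Observable u₀ u₁) 0 t := by
  have hexp : HasDerivAt (fun t : ℝ => (Real.exp t : ℂ)) (Real.exp t) t :=
    (Real.hasDerivAt_exp t).ofReal_comp
  have h := hexp.mul ((((hasDerivAt_const t 1).sub hd₀).pow 2).mul (hd₁.pow 2) |>.div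
    (hd₀.pow 3) (pow_ne_zero 3 hw₀))
  have hw₁' : 1 - u₀ t ≠ 0 := sub_ne_zero.mpr hw₁.symm
  refine h.congr_deriv ?_
  simp only [Pi.mul_apply, Pi.div_apply, Pi.sub_apply, Pi.pow_apply]
  field_simp
  ring

theorem sle0_first_observable_general (I : Set ℝ) (hI : I.OrdConnected) (u₀ u₁ : ℝ → ℂ)
    (h₀ : ∀ t ∈ I, u₀ t ≠ 0 ∧ u₀ t ≠ 1)
    (hd₀ : ∀ t ∈ I, HasDerivAt u₀ (u₀ t * ((1 + u₀ t) / (1 - u₀ t))) t)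
    (hd₁ : ∀ t ∈ I, HasDerivAt u₁ ((2 / (1 - u₀ t) ^ 2 - 1) * u₁ t) t) :
    ∀ s ∈ I, ∀ t ∈ I,
      (Real.exp s : ℂ) * ((1 - u₀ s) ^ 2 * (u₁ s) ^ 2 / (u₀ s) ^ 3) =
      (Real.exp t : ℂ) * ((1 - u₀ t) ^ 2 * (u₁ t) ^ 2 / (u₀ t) ^ 3) :=
  fun _ hs _ ht => hI.eq_of_hasDerivAt_eq_zero (f := sle0Observable u₀ u₁)
    (fun t ht => hasDerivAt_sle0Observable (h₀ t ht).1 (h₀ t ht).2 (hd₀ t ht) (hd₁ t ht)) hs ht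

/-- First SLE₀ observable: along the radial Loewner flow at κ = 0
(`u₀ = w_t(z)`, `u₁ = w_t'(z)`), the quantity `e^t (1-u₀)² u₁² / u₀³` is constant;
hence `arg[(1-w) w^{-3/2} w']` is an SLE₀ observable. -/
theorem sle0_first_observable (I : Set ℝ) (hI : I.OrdConnected) (u₀ u₁ : ℝ → ℂ)
    (h₀ : ∀ t ∈ I, u₀ t ≠ 0 ∧ u₀ t ≠ 1)
    (h₁ : ∀ t ∈ I, u₁ t ≠ 0)
    (hd₀ : ∀ t ∈ I, HasDerivAt u₀ (u₀ t * ((1 + u₀ t) / (1 - u₀ t))) t)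
    (hd₁ : ∀ t ∈ I, HasDerivAt u₁ ((2 / (1 - u₀ t) ^ 2 - 1) * u₁ t) t) :
    ∀ s ∈ I, ∀ t ∈ I,
      (Real.exp s : ℂ) * ((1 - u₀ s) ^ 2 * (u₁ s) ^ 2 / (u₀ s) ^ 3) =
      (Real.exp t : ℂ) * ((1 - u₀ t) ^ 2 * (u₁ t) ^ 2 / (u₀ t) ^ 3) :=
  sle0_first_observable_general I hI u₀ u₁ h₀ hd₀ hd₁
end

section
/- Let $a, b \in \mathbb{C}$ and define $j(z) := \dfrac{ia}{1-z} + \left(\dfrac{ia}{2} - ib\right)\dfrac{1}{z}$ for $z \in \mathbb{C}\setminus\{0,1\}$. Then for all $z \in \mathbb{C}\setminus\{0,1\}$: $-\dfrac{1}{2}\,j(z)^2 + ib\,j'(z) \;=\; \dfrac{h_{1,2}}{z(1-z)^2} + \dfrac{h_{0,1/2}}{z^2}$, where $h_{1,2} = \dfrac{a^2}{2} - ab$ and $h_{0,1/2} = \dfrac{a^2}{8} - \dfrac{b^2}{2}$. -/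
/-!
Write `j = c / (1 - z) + d / z` with `c = i a`, `d = i a / 2 - i b` and `β = i b`, so that
`j' = c / (1 - z) ^ 2 - d / z ^ 2`. Expanding `-(1/2) j ^ 2 + β j'`, the coefficient of
`1 / (1 - z) ^ 2` is `c (β - c / 2) = -c d` exactly because `β + d = c / 2`; together with the cross
term `-c d / (z (1 - z))` it merges into `-c d / (z (1 - z) ^ 2)` by
`1 / (z (1 - z)) + 1 / (1 - z) ^ 2 = 1 / (z (1 - z) ^ 2)`. Hence `h_{1,2} = -c d` and
`h_{0,1/2} = -d (d / 2 + β)`, which become the stated values once `i ^ 2 = -1`.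
-/

theorem hasDerivAt_div_one_sub_add_div {𝕜 : Type*} [NontriviallyNormedField 𝕜] (c d : 𝕜) {z : 𝕜}
    (hz : z ≠ 0) (hz1 : z ≠ 1) :
    HasDerivAt (fun y => c / (1 - y) + d / y) (c / (1 - z) ^ 2 - d / z ^ 2) z := by
  have h1 : 1 - z ≠ 0 := sub_ne_zero.mpr hz1.symm
  have hc := (hasDerivAt_const z c).fun_div ((hasDerivAt_id' z).const_sub 1) h1
  have hd := (hasDerivAt_const z d).fun_div (hasDerivAt_id' z) hz
  exact (hc.add hd).congr_deriv (by ring)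

theorem neg_half_sq_add_mul_eq_of_add_eq_half {K : Type*} [Field K] [CharZero K] {c d β z : K}
    (hz : z ≠ 0) (hz1 : z ≠ 1) (hβ : β + d = c / 2) :
    -(1 / 2) * (c / (1 - z) + d / z) ^ 2 + β * (c / (1 - z) ^ 2 - d / z ^ 2)
      = -(c * d) / (z * (1 - z) ^ 2) - d * (d / 2 + β) / z ^ 2 := by
  have h1 : 1 - z ≠ 0 := sub_ne_zero.mpr hz1.symm
  field_simp
  linear_combination (2 * c * z ^ 2) * hβ

/-- With `j(z) = ia/(1-z) + (ia/2 - ib)/z`, one has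
`-(1/2) j(z)² + i b j'(z) = h_{1,2} / (z(1-z)²) + h_{0,1/2} / z²`
where `h_{1,2} = a²/2 - ab` and `h_{0,1/2} = a²/8 - b²/2`. -/
theorem one_point_virasoro (a b : ℂ) :
    ∀ z : ℂ, z ≠ 0 → z ≠ 1 →
      -(1 / 2) * (Complex.I * a / (1 - z) + (Complex.I * a / 2 - Complex.I * b) / z) ^ 2
        + Complex.I * b *
          deriv (fun y : ℂ => Complex.I * a / (1 - y) + (Complex.I * a / 2 - Complex.I * b) / y) z
      = (a ^ 2 / 2 - a * b) / (z * (1 - z) ^ 2) + (a ^ 2 / 8 - b ^ 2 / 2) / z ^ 2 := by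
  intro z hz hz1
  rw [(hasDerivAt_div_one_sub_add_div _ _ hz hz1).deriv,
    neg_half_sq_add_mul_eq_of_add_eq_half hz hz1 (by ring)]
  linear_combination
    (-(a ^ 2 / 2 - a * b) / (z * (1 - z) ^ 2) - (a ^ 2 / 8 - b ^ 2 / 2) / z ^ 2) * Complex.I_sq
end

section
/- BPZ-Cardy equation for the one-point function of the Virasoro field. Let $\kappa > 0$, set $h_{1,2} = \dfrac{6-\kappa}{2\kappa}$, $h_{0,1/2} = \dfrac{(6-\kappa)(\kappa-2)}{16\kappa}$, $c = \dfrac{(3\kappa-8)(6-\kappa)}{2\kappa}$, and define $R(z) := \dfrac{h_{1,2}}{z(1-z)^2} + \dfrac{h_{0,1/2}}{z^2}$. Then for every $z \in \mathbb{C}\setminus\{0,1\}$: $\dfrac{\kappa}{2}\big(z^2 R''(z) + 5z R'(z) + 4R(z)\big) \;=\; z\,\dfrac{1+z}{1-z}\,R'(z) + 2\,\dfrac{1+2z-z^2}{(1-z)^2}\,R(z) + \dfrac{c}{(1-z)^4}$. -/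
/-!
`R` is a rational function with poles at `0` and `1`, so `R'` and `R''` are explicit and,
after clearing the denominators `z⁴ (1 - z)⁴`, the equation is a polynomial identity. It holds
for `R = A / (z (1 - z)²) + B / z²` with any `A`, provided `B = A (κ - 2) / 8` and the
central term is `A (3κ - 8) / (1 - z)⁴`; with `A = h_{1,2}` these are `h_{0,1/2}` and `c`.
-/

/-- The one-point function of the Virasoro field under the one-leg insertion, in the
`(𝔻,1,0)`-uniformization: `R(z) = h_{1,2}/(z(1-z)²) + h_{0,1/2}/z²` with
`h_{1,2} = (6-κ)/(2κ)` and `h_{0,1/2} = (6-κ)(κ-2)/(16κ)`. -/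
noncomputable def virasoroOnePoint (κ : ℝ) (z : ℂ) : ℂ :=
  (((6 - κ) / (2 * κ) : ℝ) : ℂ) / (z * (1 - z) ^ 2)
    + (((6 - κ) * (κ - 2) / (16 * κ) : ℝ) : ℂ) / z ^ 2

open Filter Topology

noncomputable def poleProfile (A B : ℂ) (w : ℂ) : ℂ :=
  A / (w * (1 - w) ^ 2) + B / w ^ 2

section

variable (A B : ℂ) {z : ℂ}

theorem hasDerivAt_poleProfile (hz0 : z ≠ 0) (hz1 : z ≠ 1) :
    HasDerivAt (poleProfile A B)
      (A * (3 * z - 1) / (z ^ 2 * (1 - z) ^ 3) - 2 * B / z ^ 3) z := by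
  have h1 : 1 - z ≠ 0 := sub_ne_zero.mpr hz1.symm
  have hden : HasDerivAt (fun w ↦ w * (1 - w) ^ 2)
      (1 * (1 - z) ^ 2 + z * (2 * (1 - z) ^ 1 * (0 - 1))) z :=
    (hasDerivAt_id z).mul (((hasDerivAt_const z 1).sub (hasDerivAt_id z)).pow 2)
  have h := ((hasDerivAt_const z A).div hden (by simp [hz0, h1])).add
    ((hasDerivAt_const z B).div (hasDerivAt_pow 2 z) (pow_ne_zero 2 hz0))
  refine h.congr_deriv ?_
  field_simp
  ring

theorem deriv_poleProfile_eventuallyEq (hz0 : z ≠ 0) (hz1 : z ≠ 1) :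
    deriv (poleProfile A B) =ᶠ[𝓝 z]
      fun w ↦ A * (3 * w - 1) / (w ^ 2 * (1 - w) ^ 3) - 2 * B / w ^ 3 := by
  filter_upwards [isOpen_compl_singleton.mem_nhds hz0, isOpen_compl_singleton.mem_nhds hz1]
    with w hw0 hw1 using (hasDerivAt_poleProfile A B hw0 hw1).deriv

theorem deriv_deriv_poleProfile (hz0 : z ≠ 0) (hz1 : z ≠ 1) :
    deriv (deriv (poleProfile A B)) z
      = A * (12 * z ^ 2 - 8 * z + 2) / (z ^ 3 * (1 - z) ^ 4) + 6 * B / z ^ 4 := by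
  rw [(deriv_poleProfile_eventuallyEq A B hz0 hz1).deriv_eq]
  have h1 : 1 - z ≠ 0 := sub_ne_zero.mpr hz1.symm
  have hnum : HasDerivAt (fun w ↦ A * (3 * w - 1)) (A * (3 * 1)) z :=
    (((hasDerivAt_id z).const_mul 3).sub_const 1).const_mul A
  have hden : HasDerivAt (fun w ↦ w ^ 2 * (1 - w) ^ 3)
      (2 * z ^ 1 * (1 - z) ^ 3 + z ^ 2 * (3 * (1 - z) ^ 2 * (0 - 1))) z :=
    (hasDerivAt_pow 2 z).mul (((hasDerivAt_const z 1).sub (hasDerivAt_id z)).pow 3)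
  have h := (hnum.div hden (by simp [hz0, h1])).sub
    ((hasDerivAt_const z (2 * B)).div (hasDerivAt_pow 3 z) (pow_ne_zero 3 hz0))
  refine (h.congr_deriv ?_).deriv
  field_simp
  ring

end

theorem poleProfile_bpz (κ A : ℂ) {z : ℂ} (hz0 : z ≠ 0) (hz1 : z ≠ 1) :
    let R := poleProfile A (A * (κ - 2) / 8)
    κ / 2 * (z ^ 2 * deriv (deriv R) z + 5 * z * deriv R z + 4 * R z)
      = z * ((1 + z) / (1 - z)) * deriv R z + 2 * ((1 + 2 * z - z ^ 2) / (1 - z) ^ 2) * R z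
        + A * (3 * κ - 8) / (1 - z) ^ 4 := by
  have h1 : 1 - z ≠ 0 := sub_ne_zero.mpr hz1.symm
  simp only [deriv_deriv_poleProfile _ _ hz0 hz1, (hasDerivAt_poleProfile _ _ hz0 hz1).deriv,
    poleProfile]
  field_simp
  ring

theorem bpz_cardy_one_point_general (κ : ℝ) (z : ℂ) (hz0 : z ≠ 0) (hz1 : z ≠ 1) :
    ((κ / 2 : ℝ) : ℂ) *
        (z ^ 2 * deriv (deriv (virasoroOnePoint κ)) z
          + 5 * z * deriv (virasoroOnePoint κ) z + 4 * virasoroOnePoint κ z)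
      = z * ((1 + z) / (1 - z)) * deriv (virasoroOnePoint κ) z
        + 2 * ((1 + 2 * z - z ^ 2) / (1 - z) ^ 2) * virasoroOnePoint κ z
        + (((3 * κ - 8) * (6 - κ) / (2 * κ) : ℝ) : ℂ) / (1 - z) ^ 4 := by
  set A : ℂ := (((6 - κ) / (2 * κ) : ℝ) : ℂ) with hA
  have hR : virasoroOnePoint κ = poleProfile A (A * (κ - 2) / 8) := by
    ext w
    simp only [virasoroOnePoint, poleProfile, hA]
    push_cast
    ring
  have hc : (((3 * κ - 8) * (6 - κ) / (2 * κ) : ℝ) : ℂ) = A * (3 * κ - 8) := by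
    rw [hA]
    push_cast
    ring
  rw [hR, hc, Complex.ofReal_div, Complex.ofReal_ofNat]
  exact poleProfile_bpz κ A hz0 hz1

/-- BPZ-Cardy equation for the one-point function of the Virasoro field:
with `R` as above and `c = (3κ-8)(6-κ)/(2κ)`,
`(κ/2)(z²R'' + 5zR' + 4R) = z (1+z)/(1-z) R' + 2 (1+2z-z²)/(1-z)² R + c/(1-z)⁴`. -/
theorem bpz_cardy_one_point (κ : ℝ) (hκ : 0 < κ) (z : ℂ) (hz0 : z ≠ 0) (hz1 : z ≠ 1) :
    ((κ / 2 : ℝ) : ℂ) *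
        (z ^ 2 * deriv (deriv (virasoroOnePoint κ)) z
          + 5 * z * deriv (virasoroOnePoint κ) z + 4 * virasoroOnePoint κ z)
      = z * ((1 + z) / (1 - z)) * deriv (virasoroOnePoint κ) z
        + 2 * ((1 + 2 * z - z ^ 2) / (1 - z) ^ 2) * virasoroOnePoint κ z
        + (((3 * κ - 8) * (6 - κ) / (2 * κ) : ℝ) : ℂ) / (1 - z) ^ 4 :=
  bpz_cardy_one_point_general κ z hz0 hz1
end

section
/- Neutrality is equivalent to vanishing drift for 1-point vertex observables. Let $\kappa > 0$, $a = \sqrt{2/\kappa}$, and let $\sigma, \sigma_*, \sigma_q, \sigma_{q*}$ be real numbers with $\sigma \ne 0$ and $\sigma_* \ne 0$. Define $\alpha = \sigma\sigma_q + \sigma^2$, $\alpha_* = \sigma_*\sigma_{q*} + \sigma_*^2$, $\beta = \dfrac{\sigma_q(\sigma_q - a)}{2} - \dfrac{\sigma(\sigma + a)}{2}$, $\beta_* = \dfrac{\sigma_{q*}(\sigma_{q*} - a)}{2} - \dfrac{\sigma_*(\sigma_* + a)}{2}$, and $D = \alpha + \beta - \alpha_* - \beta_*$. Then the three equations $2\alpha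 + \sqrt{2\kappa}\,\sigma D = 0$, $2\alpha_* - \sqrt{2\kappa}\,\sigma_* D = 0$, and $\alpha + \beta + \alpha_* + \beta_* - \dfrac{\kappa}{2}D^2 = 0$ all hold if and only if the neutrality condition $\sigma + \sigma_* + \sigma_q + \sigma_{q*} = 0$ holds. -/
/-!
Writing `p = σ + σ_q` and `p* = σ* + σ_{q*}`, one has `α = σ p`, `α* = σ* p*`,
`α + β = p (p - a) / 2` and `α* + β* = p* (p* - a) / 2`. Since `σ, σ* ≠ 0`, the first two
drift equations say `2p = -√(2κ) D = -2p*`, i.e. neutrality. Conversely, under neutrality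
`D = -a p`, and `√(2κ) a = 2`, `κ a² = 2` make all three drift coefficients vanish.
-/

namespace VertexObservable

lemma sqrt_two_mul_mul_sqrt_two_div {κ : ℝ} (hκ : 0 < κ) :
    Real.sqrt (2 * κ) * Real.sqrt (2 / κ) = 2 := by
  rw [← Real.sqrt_mul (by positivity), show 2 * κ * (2 / κ) = 2 ^ 2 by field_simp]
  exact Real.sqrt_sq zero_le_two

lemma mul_sqrt_two_div_sq {κ : ℝ} (hκ : 0 < κ) : κ * Real.sqrt (2 / κ) ^ 2 = 2 := by
  rw [Real.sq_sqrt (by positivity)]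
  field_simp

variable {s a κ σ σs σq σqs α αs β βs D : ℝ}

lemma neutral_of_drift_eq_zero (hσ : σ ≠ 0) (hσs : σs ≠ 0)
    (hα : α = σ * σq + σ ^ 2) (hαs : αs = σs * σqs + σs ^ 2)
    (h₁ : 2 * α + s * σ * D = 0) (h₂ : 2 * αs - s * σs * D = 0) :
    σ + σs + σq + σqs = 0 := by
  have h₁' : σ * (2 * (σ + σq) + s * D) = 0 := by linear_combination h₁ - 2 * hα
  have h₂' : σs * (2 * (σs + σqs) - s * D) = 0 := by linear_combination h₂ - 2 * hαs
  have e₁ := (mul_eq_zero.1 h₁').resolve_left hσ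
  have e₂ := (mul_eq_zero.1 h₂').resolve_left hσs
  linarith

lemma drift_exponent_eq_of_neutral
    (hα : α = σ * σq + σ ^ 2) (hαs : αs = σs * σqs + σs ^ 2)
    (hβ : β = σq * (σq - a) / 2 - σ * (σ + a) / 2)
    (hβs : βs = σqs * (σqs - a) / 2 - σs * (σs + a) / 2)
    (hN : σ + σs + σq + σqs = 0) :
    α + β - αs - βs = -a * (σ + σq) := by
  obtain rfl : σqs = -(σ + σs + σq) := by linarith
  subst hα hαs hβ hβs
  ring

lemma driftless_of_neutral (hsa : s * a = 2) (hκa : κ * a ^ 2 = 2)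
    (hα : α = σ * σq + σ ^ 2) (hαs : αs = σs * σqs + σs ^ 2)
    (hβ : β = σq * (σq - a) / 2 - σ * (σ + a) / 2)
    (hβs : βs = σqs * (σqs - a) / 2 - σs * (σs + a) / 2)
    (hD : D = α + β - αs - βs) (hN : σ + σs + σq + σqs = 0) :
    2 * α + s * σ * D = 0 ∧ 2 * αs - s * σs * D = 0 ∧
      α + β + αs + βs - κ / 2 * D ^ 2 = 0 := by
  rw [drift_exponent_eq_of_neutral hα hαs hβ hβs hN] at hD
  obtain rfl : σqs = -(σ + σs + σq) := by linarith
  subst hα hαs hβ hβs hD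
  refine ⟨?_, ?_, ?_⟩
  · linear_combination (-(σ * (σ + σq))) * hsa
  · linear_combination (σs * (σ + σq)) * hsa
  · linear_combination (-((σ + σq) ^ 2) / 2) * hκa

end VertexObservable

open VertexObservable in
/-- Neutrality is equivalent to vanishing drift for 1-point rooted
vertex observables: with `a = √(2/κ)` and the exponents
`α = σσ_q + σ²`, `α* = σ*σ_{q*} + σ*²`, `β = σ_q(σ_q - a)/2 - σ(σ + a)/2`,
`β* = σ_{q*}(σ_{q*} - a)/2 - σ*(σ* + a)/2`, `D = α + β - α* - β*`,
the three drift equations hold iff `σ + σ* + σ_q + σ_{q*} = 0`. -/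
theorem neutrality_iff_driftless (κ : ℝ) (hκ : 0 < κ)
    (σ σs σq σqs : ℝ) (hσ : σ ≠ 0) (hσs : σs ≠ 0)
    (a α αs β βs D : ℝ)
    (ha : a = Real.sqrt (2 / κ))
    (hα : α = σ * σq + σ ^ 2)
    (hαs : αs = σs * σqs + σs ^ 2)
    (hβ : β = σq * (σq - a) / 2 - σ * (σ + a) / 2)
    (hβs : βs = σqs * (σqs - a) / 2 - σs * (σs + a) / 2)
    (hD : D = α + β - αs - βs) :
    (2 * α + Real.sqrt (2 * κ) * σ * D = 0 ∧
      2 * αs - Real.sqrt (2 * κ) * σs * D = 0 ∧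
      α + β + αs + βs - κ / 2 * D ^ 2 = 0) ↔
    σ + σs + σq + σqs = 0 := by
  subst ha
  exact ⟨fun ⟨h₁, h₂, _⟩ => neutral_of_drift_eq_zero hσ hσs hα hαs h₁ h₂,
    driftless_of_neutral (sqrt_two_mul_mul_sqrt_two_div hκ) (mul_sqrt_two_div_sq hκ)
      hα hαs hβ hβs hD⟩
end
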